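/- arXiv:1202.1950 — 3 statements merged into one kernel-verified Lean document; each statement's English description precedes it below -/
import Mathlib

section
/- Let f : ℝ⁺ → ℝ⁺ be a nondecreasing function with f(0) = 0 that is regularly varying at infinity with index γ ≥ 0, and let θ be a nonnegative random variable with an absolutely continuous law having finite moments of all positive orders. Define f*(t) := E[f((t − θ)⁺)]. Then f*(t) ∼ f(t) as t → ∞; in particular f* is regularly varying at infinity with index γ. -/
/-!
The upper bound `f*(t) ≤ f(t)` holds because `f` is nondecreasing and `θ ≥ 0`. For the lower
bound fix `l < 1` and `M`: once `t - M ≥ l t`, on the event `θ ≤ M` we have `(t - θ)⁺ ≥ l t`, so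
`f*(t) ≥ f(l t) ℙ(θ ≤ M)`, and the ratio `f(l t) / f(t)` tends to `l ^ γ`. Letting `l → 1` and
`M → ∞` makes `l ^ γ ℙ(θ ≤ M)` as close to `1` as we like.
-/

open MeasureTheory Set Filter ProbabilityTheory Topology

/-- If `f` vanished eventually, the ratio would eventually be the junk value `x / 0 = 0`. -/
lemma frequently_ne_zero_of_tendsto_div_comp_mul {f : ℝ → ℝ} {l c : ℝ} (hc : c ≠ 0)
    (h : Tendsto (fun t => f (l * t) / f t) atTop (𝓝 c)) : ∃ᶠ t in atTop, f t ≠ 0 := by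
  intro hzero
  have h0 : Tendsto (fun t => f (l * t) / f t) atTop (𝓝 0) :=
    tendsto_const_nhds.congr' <| hzero.mono fun t ht => by simp [not_not.mp ht]
  exact hc (tendsto_nhds_unique h h0)

lemma eventually_pos_of_frequently_ne_zero {f : ℝ → ℝ} (hf_mono : MonotoneOn f (Ici 0))
    (hf_nonneg : ∀ x ∈ Ici (0:ℝ), 0 ≤ f x) (h : ∃ᶠ t in atTop, f t ≠ 0) :
    ∀ᶠ t in atTop, 0 < f t := by
  obtain ⟨t₀, hft₀, ht₀⟩ := (h.and_eventually (eventually_ge_atTop 0)).exists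
  filter_upwards [eventually_ge_atTop t₀] with t ht
  exact ((hf_nonneg t₀ ht₀).lt_of_ne' hft₀).trans_le (hf_mono ht₀ (ht₀.trans ht) ht)

section Distribution

variable {Ω : Type*} [MeasurableSpace Ω] {μ : Measure Ω} [IsProbabilityMeasure μ] {θ : Ω → ℝ}

lemma tendsto_measureReal_le_atTop (hθ : Measurable θ) :
    Tendsto (fun M => μ.real {ω | θ ω ≤ M}) atTop (𝓝 1) := by
  have : IsProbabilityMeasure (μ.map θ) := Measure.isProbabilityMeasure_map hθ.aemeasurable
  refine (tendsto_cdf_atTop (μ := μ.map θ)).congr fun M => ?_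
  rw [cdf_eq_real, map_measureReal_apply hθ measurableSet_Iic]
  rfl

lemma exists_lt_rpow_mul_measureReal_le (hθ : Measurable θ) (γ : ℝ) {a : ℝ} (ha : a < 1) :
    ∃ l M : ℝ, 0 < l ∧ l < 1 ∧ a < l ^ γ * μ.real {ω | θ ω ≤ M} := by
  have hpow : Tendsto (fun l : ℝ => l ^ γ) (𝓝[<] 1) (𝓝 1) := by
    simpa using (Real.continuousAt_rpow_const 1 γ (Or.inl one_ne_zero)).tendsto.mono_left
      nhdsWithin_le_nhds
  have hcdf := tendsto_measureReal_le_atTop (μ := μ) hθ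
  have hprod := (hpow.comp tendsto_fst).mul (hcdf.comp (tendsto_snd (f := 𝓝[<] (1:ℝ))))
  rw [mul_one] at hprod
  obtain ⟨⟨l, M⟩, hlt, hl⟩ := ((hprod.eventually (lt_mem_nhds ha)).and
    (tendsto_fst.eventually (Ioo_mem_nhdsLT zero_lt_one))).exists
  exact ⟨l, M, hl.1, hl.2, hlt⟩

end Distribution

lemma comp_max_sub_le {Ω : Type*} {f : ℝ → ℝ} {θ : Ω → ℝ} (hf_mono : MonotoneOn f (Ici 0))
    (hθ_nonneg : ∀ ω, 0 ≤ θ ω) (t : ℝ) (ω : Ω) : f (max (t - θ ω) 0) ≤ f (max t 0) :=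
  hf_mono (le_max_right (t - θ ω) 0) (le_max_right t 0)
    (max_le_max_right 0 (by linarith [hθ_nonneg ω]))

section PositivePartShift

variable {Ω : Type*} [MeasurableSpace Ω] {μ : Measure Ω} [IsProbabilityMeasure μ]
  {f : ℝ → ℝ} {θ : Ω → ℝ}

lemma measurable_comp_max_sub (hf_mono : MonotoneOn f (Ici 0)) (hθ : Measurable θ) (t : ℝ) :
    Measurable fun ω => f (max (t - θ ω) 0) := by
  have hmono : Monotone fun x => f (max x 0) := fun x y hxy =>
    hf_mono (le_max_right x 0) (le_max_right y 0) (max_le_max_right 0 hxy)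
  exact hmono.measurable.comp (measurable_const.sub hθ)

lemma integrable_comp_max_sub (hf_mono : MonotoneOn f (Ici 0))
    (hf_nonneg : ∀ x ∈ Ici (0:ℝ), 0 ≤ f x) (hθ : Measurable θ) (hθ_nonneg : ∀ ω, 0 ≤ θ ω)
    (t : ℝ) : Integrable (fun ω => f (max (t - θ ω) 0)) μ := by
  refine .mono' (integrable_const (f (max t 0)))
    (measurable_comp_max_sub hf_mono hθ t).aestronglyMeasurable (ae_of_all _ fun ω => ?_)
  rw [Real.norm_of_nonneg (hf_nonneg _ (mem_Ici.mpr (le_max_right _ _)))]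
  exact comp_max_sub_le hf_mono hθ_nonneg t ω

lemma integral_comp_max_sub_le (hf_mono : MonotoneOn f (Ici 0))
    (hf_nonneg : ∀ x ∈ Ici (0:ℝ), 0 ≤ f x) (hθ : Measurable θ) (hθ_nonneg : ∀ ω, 0 ≤ θ ω)
    {t : ℝ} (ht : 0 ≤ t) : ∫ ω, f (max (t - θ ω) 0) ∂μ ≤ f t := by
  calc ∫ ω, f (max (t - θ ω) 0) ∂μ ≤ ∫ _, f (max t 0) ∂μ :=
        integral_mono (integrable_comp_max_sub hf_mono hf_nonneg hθ hθ_nonneg t)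
          (integrable_const _) (comp_max_sub_le hf_mono hθ_nonneg t)
    _ = f t := by simp [max_eq_left ht]

lemma mul_measureReal_le_integral_comp_max_sub (hf_mono : MonotoneOn f (Ici 0))
    (hf_nonneg : ∀ x ∈ Ici (0:ℝ), 0 ≤ f x) (hθ : Measurable θ) (hθ_nonneg : ∀ ω, 0 ≤ θ ω)
    {s t M : ℝ} (hs : 0 ≤ s) (hst : s ≤ t - M) :
    f s * μ.real {ω | θ ω ≤ M} ≤ ∫ ω, f (max (t - θ ω) 0) ∂μ := by
  have hF := integrable_comp_max_sub (μ := μ) hf_mono hf_nonneg hθ hθ_nonneg t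
  calc f s * μ.real {ω | θ ω ≤ M} = ∫ _ in {ω | θ ω ≤ M}, f s ∂μ := by
        rw [setIntegral_const, smul_eq_mul, mul_comm]
    _ ≤ ∫ ω in {ω | θ ω ≤ M}, f (max (t - θ ω) 0) ∂μ :=
        setIntegral_mono_on (integrable_const _).integrableOn hF.integrableOn
          (measurableSet_le hθ measurable_const) fun ω (hω : θ ω ≤ M) =>
            hf_mono hs (le_max_right (t - θ ω) 0) (le_max_of_le_left (by linarith))
    _ ≤ ∫ ω, f (max (t - θ ω) 0) ∂μ :=
        setIntegral_le_integral hF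
          (ae_of_all _ fun ω => hf_nonneg _ (mem_Ici.mpr (le_max_right _ _)))

end PositivePartShift

theorem stmt3_general {Ω : Type*} [MeasureSpace Ω] [IsProbabilityMeasure (ℙ : Measure Ω)]
    (f : ℝ → ℝ) (γ : ℝ)
    (hf_mono : MonotoneOn f (Ici 0))
    (hf_nonneg : ∀ x ∈ Ici (0:ℝ), 0 ≤ f x)
    (hf_rv : ∀ l : ℝ, 0 < l →
      Tendsto (fun t => f (l * t) / f t) atTop (nhds (l ^ γ)))
    (θ : Ω → ℝ) (hθ_meas : Measurable θ) (hθ_nonneg : ∀ ω, 0 ≤ θ ω) :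
    Tendsto (fun t => (∫ ω, f (max (t - θ ω) 0)) / f t) atTop (nhds 1) := by
  have hf_pos : ∀ᶠ t in atTop, 0 < f t := eventually_pos_of_frequently_ne_zero hf_mono hf_nonneg
    (frequently_ne_zero_of_tendsto_div_comp_mul (by positivity) (hf_rv 2 two_pos))
  refine tendsto_order.2 ⟨fun a ha => ?_, fun b hb => ?_⟩
  · obtain ⟨l, M, hl0, hl1, ha⟩ := exists_lt_rpow_mul_measureReal_le (μ := ℙ) hθ_meas γ ha
    filter_upwards [((hf_rv l hl0).mul_const _).eventually (lt_mem_nhds ha), hf_pos,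
      eventually_ge_atTop (M / (1 - l)), eventually_ge_atTop 0] with t hrat hft htM ht
    have hlt : l * t ≤ t - M := by
      have := (div_le_iff₀ (sub_pos.2 hl1)).1 htM
      linarith
    calc a < f (l * t) / f t * (ℙ : Measure Ω).real {ω | θ ω ≤ M} := hrat
      _ = f (l * t) * (ℙ : Measure Ω).real {ω | θ ω ≤ M} / f t := div_mul_eq_mul_div _ _ _
      _ ≤ (∫ ω, f (max (t - θ ω) 0)) / f t := by
        gcongr
        exact mul_measureReal_le_integral_comp_max_sub hf_mono hf_nonneg hθ_meas hθ_nonneg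
          (by positivity) hlt
  · filter_upwards [hf_pos, eventually_ge_atTop 0] with t hft ht
    exact ((div_le_one hft).2
      (integral_comp_max_sub_le hf_mono hf_nonneg hθ_meas hθ_nonneg ht)).trans_lt hb

/-- If `f : ℝ⁺ → ℝ⁺` is nondecreasing with `f(0) = 0`, regularly varying at `∞` with index
`γ ≥ 0`, and `θ ≥ 0` is a random variable with an absolutely continuous law and all moments
finite, then `f*(t) := E[f((t - θ)⁺)]` satisfies `f*(t) ∼ f(t)` as `t → ∞`. -/
theorem stmt3 {Ω : Type*} [MeasureSpace Ω] [IsProbabilityMeasure (ℙ : Measure Ω)]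
    (f : ℝ → ℝ) (γ : ℝ) (hγ : 0 ≤ γ)
    (hf_mono : MonotoneOn f (Ici 0)) (hf0 : f 0 = 0)
    (hf_nonneg : ∀ x ∈ Ici (0:ℝ), 0 ≤ f x) (hf_meas : Measurable f)
    (hf_rv : ∀ l : ℝ, 0 < l →
      Tendsto (fun t => f (l * t) / f t) atTop (nhds (l ^ γ)))
    (θ : Ω → ℝ) (hθ_meas : Measurable θ) (hθ_nonneg : ∀ ω, 0 ≤ θ ω)
    (hθ_ac : Measure.map θ (ℙ : Measure Ω) ≪ volume)
    (hθ_mom : ∀ p : ℕ, Integrable (fun ω => θ ω ^ p)) :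
    Tendsto (fun t => (∫ ω, f (max (t - θ ω) 0)) / f t) atTop (nhds 1) :=
  stmt3_general f γ hf_mono hf_nonneg hf_rv θ hθ_meas hθ_nonneg
end

section
/- Under the assumptions of the preceding setup (f nondecreasing with f(0)=0, regularly varying at ∞ of index γ ≥ 0; θ ≥ 0 absolutely continuous with all moments finite; f*(t) = E[f((t−θ)⁺)]), one has ∫_{[0,t]} (f(y) − f*(y)) dy ∼ E[θ] · f(t) as t → ∞. -/
/-!
Extend `f` by `0` to a monotone `g` on `ℝ`. A shift of variables and Fubini turn the
numerator into `E[∫_{t-θ}^{t} g]`. Monotonicity traps `(∫_{t-s}^{t} g) / g(t)` between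
`s g(t-s) / g(t)` and `s`, and `g(t-s) / g(t) → 1` because `g(l t) ≤ g(t-s) ≤ g(t)` eventually
for each `l < 1`, while `g(l t) / g(t) → l ^ γ` is close to `1` for `l` close to `1`.
Dominated convergence (by `θ`) then gives `E[θ]`, which is positive since the law of `θ ≥ 0`
has no atom at `0`.
-/

open MeasureTheory Set Filter ProbabilityTheory
open scoped Topology

section

variable {g : ℝ → ℝ}

theorem Monotone.sub_mul_le_intervalIntegral (hg : Monotone g) {a b : ℝ} (hab : a ≤ b) :
    (b - a) * g a ≤ ∫ u in a..b, g u := by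
  simpa [mul_comm] using intervalIntegral.integral_mono_on (μ := volume) hab
    intervalIntegrable_const hg.intervalIntegrable fun u hu => hg hu.1

theorem Monotone.intervalIntegral_le_sub_mul (hg : Monotone g) {a b : ℝ} (hab : a ≤ b) :
    ∫ u in a..b, g u ≤ (b - a) * g b := by
  simpa [mul_comm] using intervalIntegral.integral_mono_on (μ := volume) hab hg.intervalIntegrable
    intervalIntegrable_const fun u hu => hg hu.2

theorem monotone_intervalIntegral_sub_of_nonneg (hg : Monotone g) (hg0 : 0 ≤ g) (t : ℝ) :
    Monotone fun s => ∫ u in (t - s)..t, g u := by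
  intro s s' hss'
  have hsplit := intervalIntegral.integral_add_adjacent_intervals
    (hg.intervalIntegrable (μ := volume) (a := t - s') (b := t - s))
    (hg.intervalIntegrable (b := t))
  have hnonneg : 0 ≤ ∫ u in (t - s')..(t - s), g u :=
    intervalIntegral.integral_nonneg (by linarith) fun u _ => hg0 u
  simp only
  linarith

theorem exists_mem_Ioo_lt_rpow {a : ℝ} (ha : a < 1) (γ : ℝ) :
    ∃ l ∈ Ioo (0 : ℝ) 1, a < l ^ γ := by
  have hlim : Tendsto (fun l : ℝ => l ^ γ) (𝓝[<] 1) (𝓝 1) := by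
    simpa using ((Real.continuousAt_rpow_const 1 γ (Or.inl one_ne_zero)).tendsto).mono_left
      nhdsWithin_le_nhds
  obtain ⟨l, hal, hl⟩ := ((hlim.eventually (lt_mem_nhds ha)).and
    (Ioo_mem_nhdsLT zero_lt_one)).exists
  exact ⟨l, hl, hal⟩

theorem Monotone.tendsto_comp_sub_div_self (hg : Monotone g) (hpos : ∀ᶠ t in atTop, 0 < g t)
    {γ : ℝ} (hrv : ∀ l : ℝ, 0 < l → Tendsto (fun t => g (l * t) / g t) atTop (𝓝 (l ^ γ)))
    {s : ℝ} (hs : 0 ≤ s) : Tendsto (fun t => g (t - s) / g t) atTop (𝓝 1) := by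
  refine tendsto_order.2 ⟨fun a ha => ?_, fun b hb => ?_⟩
  · obtain ⟨l, ⟨hl0, hl1⟩, hal⟩ := exists_mem_Ioo_lt_rpow ha γ
    filter_upwards [(hrv l hl0).eventually (lt_mem_nhds hal), hpos,
      eventually_ge_atTop (s / (1 - l))] with t hat hgt hst
    have hlt : l * t ≤ t - s := by
      rw [div_le_iff₀ (by linarith)] at hst
      linarith
    exact hat.trans_le (div_le_div_of_nonneg_right (hg hlt) hgt.le)
  · filter_upwards [hpos] with t hgt
    exact ((div_le_one hgt).2 (hg (by linarith))).trans_lt hb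

theorem Monotone.tendsto_intervalIntegral_sub_div_self (hg : Monotone g)
    (hpos : ∀ᶠ t in atTop, 0 < g t) {s : ℝ} (hs : 0 ≤ s)
    (hshift : Tendsto (fun t => g (t - s) / g t) atTop (𝓝 1)) :
    Tendsto (fun t => (∫ u in (t - s)..t, g u) / g t) atTop (𝓝 s) := by
  have hlow : Tendsto (fun t => s * (g (t - s) / g t)) atTop (𝓝 s) := by
    simpa using hshift.const_mul s
  refine tendsto_of_tendsto_of_tendsto_of_le_of_le' hlow tendsto_const_nhds ?_ ?_
  · filter_upwards [hpos] with t hgt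
    rw [← mul_div_assoc]
    gcongr
    simpa using hg.sub_mul_le_intervalIntegral (by linarith : t - s ≤ t)
  · filter_upwards [hpos] with t hgt
    rw [div_le_iff₀ hgt]
    simpa using hg.intervalIntegral_le_sub_mul (by linarith : t - s ≤ t)

theorem setIntegral_Icc_sub_comp_sub_eq_intervalIntegral (hg : Monotone g)
    (hg_zero : ∀ u ≤ 0, g u = 0) {s t : ℝ} (hs : 0 ≤ s) (ht : 0 ≤ t) :
    ∫ y in Icc 0 t, (g y - g (y - s)) = ∫ u in (t - s)..t, g u := by
  have hgi : ∀ a b, IntervalIntegrable g volume a b := fun _ _ => hg.intervalIntegrable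
  have hvanish : ∫ u in -s..0, g u = 0 := by
    rw [intervalIntegral.integral_congr (g := fun _ => 0) fun u hu => hg_zero u ?_]
    · simp
    · rw [uIcc_of_le (neg_nonpos.2 hs)] at hu
      exact hu.2
  have hshift : ∫ y in (0)..t, g (y - s) = ∫ u in (0)..(t - s), g u := by
    rw [intervalIntegral.integral_comp_sub_right, zero_sub,
      ← intervalIntegral.integral_add_adjacent_intervals (hgi (-s) 0) (hgi 0 (t - s)), hvanish,
      zero_add]
  have hgs : Monotone fun y => g (y - s) := fun _ _ h => hg (sub_le_sub_right h s)
  rw [integral_Icc_eq_integral_Ioc, ← intervalIntegral.integral_of_le ht,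
    intervalIntegral.integral_sub (hgi 0 t) hgs.intervalIntegrable, hshift,
    intervalIntegral.integral_interval_sub_left (hgi 0 t) (hgi 0 (t - s))]

variable {Ω : Type*} [MeasurableSpace Ω]

theorem setIntegral_Icc_sub_integral_comp_sub_eq (hg : Monotone g) (hg0 : 0 ≤ g)
    (hg_zero : ∀ u ≤ 0, g u = 0) (μ : Measure Ω) [IsProbabilityMeasure μ] {θ : Ω → ℝ}
    (hθ : Measurable θ) (hθ0 : 0 ≤ θ) {t : ℝ} (ht : 0 ≤ t) :
    ∫ y in Icc 0 t, (g y - ∫ ω, g (y - θ ω) ∂μ) = ∫ ω, (∫ u in (t - θ ω)..t, g u) ∂μ := by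
  have hshift_le : ∀ y ω, g (y - θ ω) ≤ g y := fun y ω => hg (sub_le_self y (hθ0 ω))
  have hshift_int : ∀ y, Integrable (fun ω => g (y - θ ω)) μ := fun y =>
    (integrable_const (g y)).mono'
      (hg.measurable.comp (measurable_const.sub hθ)).aestronglyMeasurable
      (ae_of_all _ fun ω => (Real.norm_of_nonneg (hg0 _)).trans_le (hshift_le y ω))
  have hbound : ∀ y ω, y ≤ t → ‖g y - g (y - θ ω)‖ ≤ g t := fun y ω hy => by
    have h0 : 0 ≤ g (y - θ ω) := hg0 _
    rw [Real.norm_of_nonneg (sub_nonneg.2 (hshift_le y ω))]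
    linarith [hg hy]
  have hint : Integrable (Function.uncurry fun y ω => g y - g (y - θ ω))
      ((volume.restrict (Icc 0 t)).prod μ) := by
    have hmeas : Measurable (Function.uncurry fun y ω => g y - g (y - θ ω)) :=
      (hg.measurable.comp measurable_fst).sub
        (hg.measurable.comp (measurable_fst.sub (hθ.comp measurable_snd)))
    refine (integrable_const (g t)).mono' hmeas.aestronglyMeasurable ?_
    filter_upwards [Measure.quasiMeasurePreserving_fst.ae (ae_restrict_mem measurableSet_Icc)]
      with p hp using hbound p.1 p.2 hp.2
  calc ∫ y in Icc 0 t, (g y - ∫ ω, g (y - θ ω) ∂μ)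
      = ∫ y in Icc 0 t, ∫ ω, (g y - g (y - θ ω)) ∂μ := by
        refine setIntegral_congr_fun measurableSet_Icc fun y _ => ?_
        rw [integral_sub (integrable_const _) (hshift_int y), integral_const, probReal_univ,
          one_smul]
    _ = ∫ ω, (∫ y in Icc 0 t, (g y - g (y - θ ω))) ∂μ := integral_integral_swap hint
    _ = ∫ ω, (∫ u in (t - θ ω)..t, g u) ∂μ := integral_congr_ae <| ae_of_all _ fun ω =>
        setIntegral_Icc_sub_comp_sub_eq_intervalIntegral hg hg_zero (hθ0 ω) ht

theorem integral_pos_of_map_absolutelyContinuous (μ : Measure Ω) [NeZero μ] {θ : Ω → ℝ}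
    (hθ : Measurable θ) (hθ0 : 0 ≤ θ) (hθi : Integrable θ μ) (hac : μ.map θ ≪ volume) :
    0 < ∫ ω, θ ω ∂μ := by
  have hatom : μ (θ ⁻¹' {0}) = 0 := by
    rw [← Measure.map_apply hθ (measurableSet_singleton 0)]
    exact hac Real.volume_singleton
  rw [integral_pos_iff_support_of_nonneg hθ0 hθi, measure_congr (ae_eq_univ.2 ?_)]
  · exact Measure.measure_univ_pos.2 (NeZero.ne μ)
  · rwa [Function.compl_support]

theorem tendsto_integral_intervalIntegral_sub_div (hg : Monotone g) (hg0 : 0 ≤ g)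
    (hpos : ∀ᶠ t in atTop, 0 < g t)
    (hlim : ∀ s, 0 ≤ s → Tendsto (fun t => (∫ u in (t - s)..t, g u) / g t) atTop (𝓝 s))
    (μ : Measure Ω) {θ : Ω → ℝ} (hθ0 : 0 ≤ θ) (hθi : Integrable θ μ) :
    Tendsto (fun t => ∫ ω, (∫ u in (t - θ ω)..t, g u) / g t ∂μ) atTop (𝓝 (∫ ω, θ ω ∂μ)) := by
  refine tendsto_integral_filter_of_dominated_convergence θ (Eventually.of_forall fun t =>
      (((monotone_intervalIntegral_sub_of_nonneg hg hg0 t).measurable.comp_aemeasurable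
        hθi.aemeasurable).div_const _).aestronglyMeasurable)
    ?_ hθi (ae_of_all _ fun ω => hlim _ (hθ0 ω))
  filter_upwards [hpos] with t hgt
  refine ae_of_all _ fun ω => ?_
  rw [Real.norm_of_nonneg (div_nonneg (intervalIntegral.integral_nonneg
    (sub_le_self t (hθ0 ω)) fun u _ => hg0 u) hgt.le), div_le_iff₀ hgt]
  simpa using hg.intervalIntegral_le_sub_mul (sub_le_self t (hθ0 ω))

theorem Monotone.tendsto_setIntegral_Icc_sub_integral_comp_sub_div (hg : Monotone g)
    (hg0 : 0 ≤ g) (hg_zero : ∀ u ≤ 0, g u = 0) (hpos : ∀ᶠ t in atTop, 0 < g t) {γ : ℝ}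
    (hrv : ∀ l : ℝ, 0 < l → Tendsto (fun t => g (l * t) / g t) atTop (𝓝 (l ^ γ)))
    (μ : Measure Ω) [IsProbabilityMeasure μ] {θ : Ω → ℝ} (hθ : Measurable θ) (hθ0 : 0 ≤ θ)
    (hθi : Integrable θ μ) (hac : μ.map θ ≪ volume) :
    Tendsto (fun t => (∫ y in Icc 0 t, (g y - ∫ ω, g (y - θ ω) ∂μ)) / ((∫ ω, θ ω ∂μ) * g t))
      atTop (𝓝 1) := by
  have hlim : Tendsto (fun t => ∫ ω, (∫ u in (t - θ ω)..t, g u) / g t ∂μ) atTop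
      (𝓝 (∫ ω, θ ω ∂μ)) :=
    tendsto_integral_intervalIntegral_sub_div hg hg0 hpos (fun s hs =>
      hg.tendsto_intervalIntegral_sub_div_self hpos hs (hg.tendsto_comp_sub_div_self hpos hrv hs))
      μ hθ0 hθi
  rw [← div_self (integral_pos_of_map_absolutelyContinuous μ hθ hθ0 hθi hac).ne']
  refine (hlim.div_const _).congr' ?_
  filter_upwards [eventually_ge_atTop 0] with t ht
  rw [setIntegral_Icc_sub_integral_comp_sub_eq hg hg0 hg_zero μ hθ hθ0 ht, integral_div, div_div,
    mul_comm]

end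

theorem stmt4_general {Ω : Type*} [MeasureSpace Ω] [IsProbabilityMeasure (ℙ : Measure Ω)]
    (f : ℝ → ℝ) (γ : ℝ)
    (hf_mono : MonotoneOn f (Ici 0)) (hf0 : f 0 = 0)
    (hf_rv : ∀ l : ℝ, 0 < l →
      Tendsto (fun t => f (l * t) / f t) atTop (nhds (l ^ γ)))
    (θ : Ω → ℝ) (hθ_meas : Measurable θ) (hθ_nonneg : ∀ ω, 0 ≤ θ ω)
    (hθ_ac : Measure.map θ (ℙ : Measure Ω) ≪ volume)
    (hθ_mom : ∀ p : ℕ, Integrable (fun ω => θ ω ^ p)) :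
    Tendsto (fun t => (∫ y in Icc (0:ℝ) t, (f y - ∫ ω, f (max (y - θ ω) 0)))
        / ((∫ ω, θ ω) * f t)) atTop (nhds 1) := by
  set g : ℝ → ℝ := fun u => f (max u 0)
  have hg_mono : Monotone g := fun u v huv =>
    hf_mono (le_max_right u 0) (le_max_right v 0) (max_le_max_right 0 huv)
  have hg_nonneg : 0 ≤ g := fun u =>
    hf0.ge.trans (hf_mono self_mem_Ici (le_max_right u 0) (le_max_right u 0))
  have hg_zero : ∀ u ≤ 0, g u = 0 := fun u hu => by simp [g, max_eq_right hu, hf0]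
  have hg_eq : ∀ u, 0 ≤ u → g u = f u := fun u hu => by simp [g, max_eq_left hu]
  have hpos : ∀ᶠ t in atTop, 0 < g t := by
    have hne : ∀ᶠ t in atTop, f t ≠ 0 := ((hf_rv 1 one_pos).eventually
      (eventually_ne_nhds (show (1 : ℝ) ^ γ ≠ 0 by simp))).mono fun t ht h0 =>
      ht (by simp [h0])
    filter_upwards [hne, eventually_ge_atTop 0] with t ht ht0
    exact (hg_nonneg t).lt_of_ne (by rw [hg_eq t ht0]; exact ht.symm)
  have hrv : ∀ l : ℝ, 0 < l → Tendsto (fun t => g (l * t) / g t) atTop (𝓝 (l ^ γ)) :=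
    fun l hl => (hf_rv l hl).congr' <| by
      filter_upwards [eventually_ge_atTop 0] with t ht
      rw [hg_eq t ht, hg_eq (l * t) (by positivity)]
  refine (hg_mono.tendsto_setIntegral_Icc_sub_integral_comp_sub_div hg_nonneg hg_zero hpos hrv ℙ
    hθ_meas hθ_nonneg (by simpa using hθ_mom 1) hθ_ac).congr' ?_
  filter_upwards [eventually_ge_atTop 0] with t ht
  rw [hg_eq t ht]
  congr 1
  exact setIntegral_congr_fun measurableSet_Icc fun y hy => by rw [hg_eq y hy.1]

/-- Under the same assumptions as in the previous setup (`f` nondecreasing, `f(0)=0`,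
regularly varying of index `γ ≥ 0`; `θ ≥ 0` absolutely continuous with all moments finite;
`f*(t) = E[f((t-θ)⁺)]`), one has `∫_{[0,t]} (f(y) - f*(y)) dy ∼ E[θ]·f(t)` as `t → ∞`. -/
theorem stmt4 {Ω : Type*} [MeasureSpace Ω] [IsProbabilityMeasure (ℙ : Measure Ω)]
    (f : ℝ → ℝ) (γ : ℝ) (hγ : 0 ≤ γ)
    (hf_mono : MonotoneOn f (Ici 0)) (hf0 : f 0 = 0)
    (hf_nonneg : ∀ x ∈ Ici (0:ℝ), 0 ≤ f x) (hf_meas : Measurable f)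
    (hf_rv : ∀ l : ℝ, 0 < l →
      Tendsto (fun t => f (l * t) / f t) atTop (nhds (l ^ γ)))
    (θ : Ω → ℝ) (hθ_meas : Measurable θ) (hθ_nonneg : ∀ ω, 0 ≤ θ ω)
    (hθ_ac : Measure.map θ (ℙ : Measure Ω) ≪ volume)
    (hθ_mom : ∀ p : ℕ, Integrable (fun ω => θ ω ^ p)) :
    Tendsto (fun t => (∫ y in Icc (0:ℝ) t, (f y - ∫ ω, f (max (y - θ ω) 0)))
        / ((∫ ω, θ ω) * f t)) atTop (nhds 1) :=
  stmt4_general f γ hf_mono hf0 hf_rv θ hθ_meas hθ_nonneg hθ_ac hθ_mom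
end

section
/- Let W be a standard Brownian motion, 0 < v < u, β > 0, and h a nonnegative nondecreasing function on [0,u]. Then E[ ( ∫_{[0,v]}(h(u−y)−h(v−y)) dW(y) + ∫_{[v,u]} h(u−y) dW(y) )⁴ ] = 3 ( ∫_{[0,v]} (h(u−y)−h(v−y))² dy + ∫_{[v,u]} h(u−y)² dy )², and this is at most 3 ( ∫_{[v,u]} h(y)² dy )². -/
/-!
`G₁ + G₂` is a centred Gaussian of variance `A + B` (the two integrals on the right), and the
fourth moment `3 (A + B)²` of such a Gaussian is the fourth derivative at `0` of its moment
generating function `exp ((A + B) t² / 2)`.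

For the bound, `0 ≤ h (v - y) ≤ h (u - y)` gives
`(h (u - y) - h (v - y))² ≤ h (u - y)² - h (v - y)²`;
after the reflections `y ↦ u - y` on `[0, u]` and `y ↦ v - y` on `[0, v]` the integrals of the
right-hand side telescope to `∫_{[v,u]} h²`.
-/

open MeasureTheory Set ProbabilityTheory Real
open scoped NNReal

lemma hasDerivAt_mul_exp_mul_sq_div_two (c : ℝ) {p : ℝ → ℝ} {p' t : ℝ}
    (hp : HasDerivAt p p' t) :
    HasDerivAt (fun t => p t * rexp (c * t ^ 2 / 2))
      ((p' + c * t * p t) * rexp (c * t ^ 2 / 2)) t := by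
  have he : HasDerivAt (fun t => rexp (c * t ^ 2 / 2)) (rexp (c * t ^ 2 / 2) * (c * t)) t := by
    have := ((hasDerivAt_pow 2 t).const_mul c).div_const 2
    convert this.exp using 1; push_cast; ring
  exact (hp.fun_mul he).congr_deriv (by ring)

lemma iteratedDeriv_four_exp_mul_sq_div_two (c : ℝ) :
    iteratedDeriv 4 (fun t => rexp (c * t ^ 2 / 2)) 0 = 3 * c ^ 2 := by
  have deriv_eq (p q : ℝ → ℝ) {p' : ℝ → ℝ} (hp : ∀ t, HasDerivAt p (p' t) t)
      (hq : ∀ t, p' t + c * t * p t = q t) :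
      deriv (fun t => p t * rexp (c * t ^ 2 / 2)) = fun t => q t * rexp (c * t ^ 2 / 2) := by
    ext t; rw [(hasDerivAt_mul_exp_mul_sq_div_two c (hp t)).deriv, hq]
  have hd1 := deriv_eq (fun _ => 1) (fun t => c * t) (fun t => hasDerivAt_const t 1)
    (fun t => by ring)
  have hd2 := deriv_eq (fun t => c * t) (fun t => c + c ^ 2 * t ^ 2)
    (fun t => (hasDerivAt_id t).const_mul c) (fun t => by ring)
  have hd3 := deriv_eq (fun t => c + c ^ 2 * t ^ 2) (fun t => 3 * c ^ 2 * t + c ^ 3 * t ^ 3)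
    (fun t => ((hasDerivAt_pow 2 t).const_mul (c ^ 2)).const_add c) (fun t => by push_cast; ring)
  have hd4 := deriv_eq (fun t => 3 * c ^ 2 * t + c ^ 3 * t ^ 3)
    (fun t => 3 * c ^ 2 + 6 * c ^ 3 * t ^ 2 + c ^ 4 * t ^ 4)
    (fun t => ((hasDerivAt_id t).const_mul (3 * c ^ 2)).add
      ((hasDerivAt_pow 3 t).const_mul (c ^ 3)))
    (fun t => by push_cast; ring)
  simp only [one_mul] at hd1
  rw [iteratedDeriv_succ', iteratedDeriv_succ', iteratedDeriv_succ', iteratedDeriv_one,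
    hd1, hd2, hd3, hd4]
  simp

lemma integral_pow_four_gaussianReal (v : ℝ≥0) :
    ∫ x, x ^ 4 ∂gaussianReal 0 v = 3 * (v : ℝ) ^ 2 := by
  have h := iteratedDeriv_mgf_zero (X := id) (μ := gaussianReal 0 v)
    (by simp [integrableExpSet_id_gaussianReal]) 4
  rw [mgf_id_gaussianReal] at h
  simpa [iteratedDeriv_four_exp_mul_sq_div_two] using h.symm

lemma integral_sq_sub_comp_sub_add_le {h : ℝ → ℝ} (h_nonneg : ∀ x, 0 ≤ h x)
    (h_mono : Monotone h) {u v : ℝ} (hv : 0 ≤ v) (hvu : v ≤ u) :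
    (∫ y in 0..v, (h (u - y) - h (v - y)) ^ 2) + ∫ y in v..u, h (u - y) ^ 2
      ≤ ∫ y in v..u, h y ^ 2 := by
  have hsq : Monotone fun x => h x ^ 2 := fun a b hab =>
    pow_le_pow_left₀ (h_nonneg a) (h_mono hab) 2
  have hsq_int (a b : ℝ) : IntervalIntegrable (fun x => h x ^ 2) volume a b :=
    hsq.intervalIntegrable
  have hsq_sub_int (c a b : ℝ) : IntervalIntegrable (fun y => h (c - y) ^ 2) volume a b :=
    (hsq.comp_antitone antitone_const_tsub).intervalIntegrable
  have hpt (y : ℝ) : (h (u - y) - h (v - y)) ^ 2 ≤ h (u - y) ^ 2 - h (v - y) ^ 2 := by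
    have := h_mono (show v - y ≤ u - y by linarith)
    nlinarith [h_nonneg (v - y)]
  have hdiff_int : IntervalIntegrable (fun y => h (u - y) ^ 2 - h (v - y) ^ 2) volume 0 v :=
    (hsq_sub_int u 0 v).sub (hsq_sub_int v 0 v)
  have hsq_diff_int : IntervalIntegrable (fun y => (h (u - y) - h (v - y)) ^ 2) volume 0 v := by
    refine hdiff_int.mono_fun' ?_ (Filter.Eventually.of_forall fun y => ?_)
    · have hm (c : ℝ) : Measurable fun y => h (c - y) :=
        h_mono.measurable.comp (measurable_const.sub measurable_id)
      exact ((hm u).sub (hm v)).pow_const 2 |>.aestronglyMeasurable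
    · simpa only [Real.norm_eq_abs, abs_pow, sq_abs] using hpt y
  calc (∫ y in 0..v, (h (u - y) - h (v - y)) ^ 2) + ∫ y in v..u, h (u - y) ^ 2
      ≤ (∫ y in 0..v, (h (u - y) ^ 2 - h (v - y) ^ 2)) + ∫ y in v..u, h (u - y) ^ 2 := by
        gcongr
        exact intervalIntegral.integral_mono_on hv hsq_diff_int hdiff_int fun y _ => hpt y
    _ = (∫ y in 0..u, h (u - y) ^ 2) - ∫ y in 0..v, h (v - y) ^ 2 := by
        rw [intervalIntegral.integral_sub (hsq_sub_int u 0 v) (hsq_sub_int v 0 v),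
          ← intervalIntegral.integral_add_adjacent_intervals (hsq_sub_int u 0 v)
            (hsq_sub_int u v u)]
        ring
    _ = ∫ y in v..u, h y ^ 2 := by
        simp only [intervalIntegral.integral_comp_sub_left (fun x => h x ^ 2), sub_self, sub_zero]
        exact intervalIntegral.integral_interval_sub_left (hsq_int 0 u) (hsq_int 0 v)

lemma integral_add_pow_four_of_indepFun {Ω : Type*} [MeasurableSpace Ω] {P : Measure Ω}
    {X Y : Ω → ℝ} {v₁ v₂ : ℝ≥0} (hXY : IndepFun X Y P)
    (hX : P.map X = gaussianReal 0 v₁) (hY : P.map Y = gaussianReal 0 v₂) :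
    ∫ ω, (X ω + Y ω) ^ 4 ∂P = 3 * ((v₁ : ℝ) + v₂) ^ 2 := by
  have hXY_law := gaussianReal_add_gaussianReal_of_indepFun hXY hX hY
  have hXY_meas : AEMeasurable (X + Y) P := .of_map_ne_zero (by simp [hXY_law, NeZero.ne])
  rw [add_zero] at hXY_law
  rw [← NNReal.coe_add, ← integral_pow_four_gaussianReal, ← hXY_law,
    integral_map hXY_meas (by fun_prop)]
  rfl

lemma setIntegral_Icc_eq_intervalIntegral {f : ℝ → ℝ} {a b : ℝ} (hab : a ≤ b) :
    ∫ x in Icc a b, f x = ∫ x in a..b, f x := by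
  rw [integral_Icc_eq_integral_Ioc, intervalIntegral.integral_of_le hab]

theorem stmt10_general {Ω : Type*} [MeasureSpace Ω]
    (u v : ℝ) (hv : 0 < v) (hvu : v < u)
    (h : ℝ → ℝ) (h_nonneg : ∀ x, 0 ≤ h x) (h_mono : Monotone h)
    (G₁ G₂ : Ω → ℝ)
    (hindep : IndepFun G₁ G₂ ℙ)
    (hG₁ : Measure.map G₁ ℙ = gaussianReal 0
      (Real.toNNReal (∫ y in Icc (0:ℝ) v, (h (u - y) - h (v - y)) ^ 2)))
    (hG₂ : Measure.map G₂ ℙ = gaussianReal 0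
      (Real.toNNReal (∫ y in Icc v u, (h (u - y)) ^ 2))) :
    (∫ ω, (G₁ ω + G₂ ω) ^ 4)
      = 3 * ((∫ y in Icc (0:ℝ) v, (h (u - y) - h (v - y)) ^ 2)
          + ∫ y in Icc v u, (h (u - y)) ^ 2) ^ 2
    ∧ (∫ ω, (G₁ ω + G₂ ω) ^ 4) ≤ 3 * (∫ y in Icc v u, (h y) ^ 2) ^ 2 := by
  set A := ∫ y in Icc (0:ℝ) v, (h (u - y) - h (v - y)) ^ 2
  set B := ∫ y in Icc v u, (h (u - y)) ^ 2
  have hA : 0 ≤ A := setIntegral_nonneg measurableSet_Icc fun y _ => sq_nonneg _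
  have hB : 0 ≤ B := setIntegral_nonneg measurableSet_Icc fun y _ => sq_nonneg _
  have hmoment : ∫ ω, (G₁ ω + G₂ ω) ^ 4 = 3 * (A + B) ^ 2 := by
    rw [integral_add_pow_four_of_indepFun hindep hG₁ hG₂, Real.coe_toNNReal _ hA,
      Real.coe_toNNReal _ hB]
  have hAB : A + B ≤ ∫ y in Icc v u, h y ^ 2 := by
    simp only [A, B, setIntegral_Icc_eq_intervalIntegral hv.le,
      setIntegral_Icc_eq_intervalIntegral hvu.le]
    exact integral_sq_sub_comp_sub_add_le h_nonneg h_mono hv.le hvu.le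
  refine ⟨hmoment, hmoment ▸ ?_⟩
  gcongr

/-- For `0 < v < u` and `h` nonnegative nondecreasing, the fourth moment of the sum of the
two independent Wiener integrals `∫_{[0,v]}(h(u-y)-h(v-y)) dW(y)` and `∫_{[v,u]} h(u-y) dW(y)`
equals `3 (∫_{[0,v]} (h(u-y)-h(v-y))² dy + ∫_{[v,u]} h(u-y)² dy)²`, which is at most
`3 (∫_{[v,u]} h(y)² dy)²`. -/
theorem stmt10 {Ω : Type*} [MeasureSpace Ω] [IsProbabilityMeasure (ℙ : Measure Ω)]
    (u v β : ℝ) (hv : 0 < v) (hvu : v < u) (hβ : 0 < β)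
    (h : ℝ → ℝ) (h_nonneg : ∀ x, 0 ≤ h x) (h_mono : Monotone h)
    (G₁ G₂ : Ω → ℝ)
    (hindep : IndepFun G₁ G₂ ℙ)
    (hG₁ : Measure.map G₁ ℙ = gaussianReal 0
      (Real.toNNReal (∫ y in Icc (0:ℝ) v, (h (u - y) - h (v - y)) ^ 2)))
    (hG₂ : Measure.map G₂ ℙ = gaussianReal 0
      (Real.toNNReal (∫ y in Icc v u, (h (u - y)) ^ 2))) :
    (∫ ω, (G₁ ω + G₂ ω) ^ 4)
      = 3 * ((∫ y in Icc (0:ℝ) v, (h (u - y) - h (v - y)) ^ 2)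
          + ∫ y in Icc v u, (h (u - y)) ^ 2) ^ 2
    ∧ (∫ ω, (G₁ ω + G₂ ω) ^ 4) ≤ 3 * (∫ y in Icc v u, (h y) ^ 2) ^ 2 :=
  stmt10_general u v hv hvu h h_nonneg h_mono G₁ G₂ hindep hG₁ hG₂
end
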